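/- For each integer n ≥ 2 let C_n be the multiset of roots in ℂ, counted with multiplicity, of the polynomial n·z^{n−1} + 1 (the finite critical points of p_n(z) = z^n + z; C_n has exactly n − 1 elements). Then for every bounded continuous function f : ℂ → ℝ, (1/(n−1)) · ∑_{c ∈ C_n} f(c^n + c) → (1/2π) · ∫₀^{2π} f(e^{iθ}) dθ as n → ∞; that is, the normalized counting measures of the finite critical values of p_n converge weakly to the uniform probability measure on the unit circle. -/

import Mathlib

/-!
The finite critical points of `z ^ n + z` are the `(n - 1)`-th roots of `-1 / n`: they sit at
the angles `(2k + 1)π / (n - 1)` on the circle of radius `n ^ (-1 / (n - 1))`, and at each of them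
`c ^ n + c = c (c ^ (n - 1) + 1) = (1 - 1 / n) c`. Hence the average of `f` over the critical
values is, up to the factor `2π`, a midpoint Riemann sum with `n - 1` pieces of
`θ ↦ f (r_n e^{iθ})`, where `r_n → 1`. These functions converge uniformly to `θ ↦ f (e^{iθ})` on
`[0, 2π]`, and midpoint Riemann sums of a uniformly convergent family of functions converge to the
integral of the limit.
-/

open Polynomial Filter Topology Finset

noncomputable def midpointSum (g : ℝ → ℝ) (a b : ℝ) (m : ℕ) : ℝ :=
  (b - a) / m * ∑ k ∈ range m, g (a + (k + 1 / 2) * ((b - a) / m))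

section MidpointSum

variable {a b : ℝ} {m : ℕ}

lemma add_mul_div_mem_Icc (hab : a ≤ b) {t : ℝ} (ht₀ : 0 ≤ t) (ht : t ≤ m) :
    a + t * ((b - a) / m) ∈ Set.Icc a b := by
  rcases Nat.eq_zero_or_pos m with rfl | hm
  · simp [hab]
  have hm' : (0 : ℝ) < m := by exact_mod_cast hm
  have hba : 0 ≤ b - a := by linarith
  refine ⟨by nlinarith [div_nonneg hba hm'.le], ?_⟩
  have : t * ((b - a) / m) ≤ b - a := by
    rw [mul_div_assoc', div_le_iff₀ hm']; nlinarith
  linarith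

lemma abs_mul_sub_integral_le {g : ℝ → ℝ} {u v t ε : ℝ} (huv : u ≤ v)
    (hg : IntervalIntegrable g MeasureTheory.volume u v)
    (h : ∀ y ∈ Set.Icc u v, |g t - g y| ≤ ε) :
    |(v - u) * g t - ∫ y in u..v, g y| ≤ ε * (v - u) := by
  rw [← smul_eq_mul, ← intervalIntegral.integral_const,
    ← intervalIntegral.integral_sub intervalIntegrable_const hg]
  have hbound : ∀ y ∈ Set.uIoc u v, ‖g t - g y‖ ≤ ε := fun y hy =>
    h y (Set.Ioc_subset_Icc_self (Set.uIoc_of_le huv ▸ hy))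
  simpa [abs_of_nonneg (sub_nonneg.2 huv)] using
    intervalIntegral.norm_integral_le_of_norm_le_const hbound

lemma abs_midpointSum_sub_integral_le {g : ℝ → ℝ} {ε : ℝ} (hab : a ≤ b) (hm : 0 < m)
    (hg : IntervalIntegrable g MeasureTheory.volume a b)
    (h : ∀ x ∈ Set.Icc a b, ∀ y ∈ Set.Icc a b,
      |x - y| ≤ (b - a) / m → |g x - g y| ≤ ε) :
    |midpointSum g a b m - ∫ x in a..b, g x| ≤ ε * (b - a) := by
  set δ := (b - a) / m
  set x : ℕ → ℝ := fun k => a + k * δ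
  have hδ : 0 ≤ δ := div_nonneg (by linarith) (Nat.cast_nonneg m)
  have hx_succ (k : ℕ) : x (k + 1) = x k + δ := by simp only [x]; push_cast; ring
  have hpiece (k : ℕ) (hk : k < m) : Set.Icc (x k) (x (k + 1)) ⊆ Set.Icc a b :=
    Set.Icc_subset_Icc (add_mul_div_mem_Icc hab k.cast_nonneg (by exact_mod_cast hk.le)).1
      (add_mul_div_mem_Icc hab (k + 1).cast_nonneg (by exact_mod_cast hk)).2
  have hint (k : ℕ) (hk : k < m) :
      IntervalIntegrable g MeasureTheory.volume (x k) (x (k + 1)) :=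
    hg.mono_set <| by
      rw [Set.uIcc_of_le (by simp [hx_succ, hδ]), Set.uIcc_of_le hab]; exact hpiece k hk
  have hsplit : ∫ y in a..b, g y = ∑ k ∈ range m, ∫ y in x k..x (k + 1), g y := by
    rw [intervalIntegral.sum_integral_adjacent_intervals hint]
    simp only [x, δ, CharP.cast_eq_zero, zero_mul, add_zero]
    field_simp; ring_nf
  have hsum : midpointSum g a b m = ∑ k ∈ range m, δ * g (x k + δ / 2) := by
    refine (mul_sum _ _ _).trans (sum_congr rfl fun k _ => ?_)
    simp only [x, δ]
    ring_nf
  have hpiece_est (k : ℕ) (hk : k < m) :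
      |δ * g (x k + δ / 2) - ∫ y in x k..x (k + 1), g y| ≤ ε * δ := by
    have hmid : x k + δ / 2 ∈ Set.Icc (x k) (x (k + 1)) := by
      rw [hx_succ]; constructor <;> linarith
    have := abs_mul_sub_integral_le (by simp [hx_succ, hδ]) (hint k hk) fun y hy =>
      h _ (hpiece k hk hmid) _ (hpiece k hk hy) <| by
        rw [hx_succ] at hy; exact abs_le.2 ⟨by linarith [hy.2], by linarith [hy.1]⟩
    rwa [hx_succ, add_sub_cancel_left, ← hx_succ] at this
  rw [hsum, hsplit, ← sum_sub_distrib]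
  calc |∑ k ∈ range m, (δ * g (x k + δ / 2) - ∫ y in x k..x (k + 1), g y)|
      ≤ ∑ _k ∈ range m, ε * δ :=
        (abs_sum_le_sum_abs _ _).trans (sum_le_sum fun k hk => hpiece_est k (mem_range.1 hk))
    _ = ε * (b - a) := by
        rw [sum_const, card_range, nsmul_eq_mul]; simp only [δ]; field_simp

lemma abs_midpointSum_sub_midpointSum_le {G g : ℝ → ℝ} {ε : ℝ} (hab : a ≤ b)
    (h : ∀ x ∈ Set.Icc a b, |G x - g x| ≤ ε) :
    |midpointSum G a b m - midpointSum g a b m| ≤ ε * (b - a) := by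
  have hε : 0 ≤ ε := (abs_nonneg _).trans (h a ⟨le_rfl, hab⟩)
  rcases Nat.eq_zero_or_pos m with rfl | hm
  · simpa [midpointSum] using mul_nonneg hε (sub_nonneg.2 hab)
  have hh : 0 ≤ (b - a) / m := div_nonneg (by linarith) m.cast_nonneg
  unfold midpointSum
  rw [← mul_sub, ← sum_sub_distrib, abs_mul, abs_of_nonneg hh]
  calc (b - a) / m * |∑ k ∈ range m, (G _ - g _)|
      ≤ (b - a) / m * ∑ _k ∈ range m, ε := by
        gcongr
        refine (abs_sum_le_sum_abs _ _).trans (sum_le_sum fun k hk => h _ ?_)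
        have hk : (k : ℝ) + 1 ≤ m := by exact_mod_cast mem_range.1 hk
        exact add_mul_div_mem_Icc hab (by positivity) (by linarith)
    _ = ε * (b - a) := by
        rw [sum_const, card_range, nsmul_eq_mul]; field_simp

lemma tendsto_midpointSum {g : ℝ → ℝ} (hab : a ≤ b) (hg : ContinuousOn g (Set.Icc a b)) :
    Tendsto (midpointSum g a b) atTop (𝓝 (∫ x in a..b, g x)) := by
  rw [Metric.tendsto_atTop]
  intro ε hε
  set η := ε / (b - a + 1)
  have hη : 0 < η := div_pos hε (by linarith)
  obtain ⟨δ, hδ, hgδ⟩ := Metric.uniformContinuousOn_iff_le.1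
    (isCompact_Icc.uniformContinuousOn_of_continuous hg) η hη
  obtain ⟨M, hM⟩ :=
    Metric.tendsto_atTop.1 (tendsto_const_div_atTop_nhds_zero_nat (b - a)) δ hδ
  refine ⟨M + 1, fun m hm => ?_⟩
  have hmesh : (b - a) / m ≤ δ := by
    have := hM m (by omega)
    rw [Real.dist_eq, sub_zero] at this
    exact (le_abs_self _).trans this.le
  rw [Real.dist_eq]
  calc |midpointSum g a b m - ∫ x in a..b, g x| ≤ η * (b - a) :=
        abs_midpointSum_sub_integral_le hab (by omega) (hg.intervalIntegrable_of_Icc hab)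
          fun x hx y hy hxy => hgδ x hx y hy ((Real.dist_eq x y).trans_le (hxy.trans hmesh))
    _ < ε := by
        rw [div_mul_eq_mul_div, div_lt_iff₀ (by linarith)]
        nlinarith

lemma tendsto_midpointSum_of_tendstoUniformlyOn {ι : Type*} {l : Filter ι} {G : ι → ℝ → ℝ}
    {g : ℝ → ℝ} {N : ι → ℕ} (hab : a ≤ b) (hG : TendstoUniformlyOn G g l (Set.Icc a b))
    (hg : ContinuousOn g (Set.Icc a b)) (hN : Tendsto N l atTop) :
    Tendsto (fun i => midpointSum (G i) a b (N i)) l (𝓝 (∫ x in a..b, g x)) := by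
  rw [Metric.tendsto_nhds]
  intro ε hε
  set η := ε / (2 * (b - a + 1))
  have hη : 0 < η := div_pos hε (by linarith)
  filter_upwards [Metric.tendstoUniformlyOn_iff.1 hG η hη,
    hN.eventually (Metric.tendsto_nhds.1 (tendsto_midpointSum hab hg) (ε / 2) (half_pos hε))]
    with i hGi hgi
  have hclose : |midpointSum (G i) a b (N i) - midpointSum g a b (N i)| ≤ η * (b - a) :=
    abs_midpointSum_sub_midpointSum_le hab fun x hx => by
      rw [← Real.dist_eq, dist_comm]; exact (hGi x hx).le
  have hηε : η * (b - a) < ε / 2 := by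
    rw [div_mul_eq_mul_div, div_lt_iff₀ (by linarith)]
    nlinarith
  calc dist (midpointSum (G i) a b (N i)) (∫ x in a..b, g x)
      ≤ dist (midpointSum (G i) a b (N i)) (midpointSum g a b (N i))
        + dist (midpointSum g a b (N i)) (∫ x in a..b, g x) := dist_triangle _ _ _
    _ < ε := by rw [Real.dist_eq]; linarith

end MidpointSum

lemma tendstoUniformlyOn_comp_mul {M α ι : Type*} [UniformSpace M] [MulOneClass M]
    [ContinuousMul M] [WeaklyLocallyCompactSpace M] [UniformSpace α] {f : M → α}
    (hf : Continuous f) {K : Set M} (hK : IsCompact K) {l : Filter ι} {s : ι → M}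
    (hs : Tendsto s l (𝓝 1)) :
    TendstoUniformlyOn (fun i z => f (s i * z)) f l K := by
  have : CompactSpace K := isCompact_iff_compactSpace.1 hK
  have hF := Continuous.tendstoUniformly (fun (t : M) (z : K) => f (t * z)) (by fun_prop) 1
  simp only [one_mul] at hF
  rw [tendstoUniformlyOn_iff_tendstoUniformly_comp_coe]
  exact fun u hu => hs.eventually (hF u hu)

lemma roots_map_pow_succ_add_self {K : Type*} [Field K] (a : K) (m : ℕ) :
    (C a * X ^ m + 1).roots.map (fun c => c ^ (m + 1) + c)
      = (C a * X ^ m + 1).roots.map (fun c => (1 - a⁻¹) * c) := by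
  refine Multiset.map_congr rfl fun c hc => ?_
  have hroot : a * c ^ m + 1 = 0 := by simpa using (mem_roots'.1 hc).2
  have ha : a ≠ 0 := by rintro rfl; simp at hroot
  have hcm : c ^ m = -a⁻¹ := by field_simp; linear_combination hroot
  rw [pow_succ, hcm]; ring

lemma roots_C_mul_X_pow_add_one {a : ℝ} (ha : 0 < a) {m : ℕ} (hm : 0 < m) :
    (C (a : ℂ) * X ^ m + 1).roots = (Multiset.range m).map fun k : ℕ =>
      ((a ^ (-1 / m : ℝ) : ℝ) : ℂ) *
        Complex.exp ((2 * (k : ℂ) + 1) * Real.pi / m * Complex.I) := by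
  have hm' : (m : ℂ) ≠ 0 := Nat.cast_ne_zero.2 hm.ne'
  have ha' : (a : ℂ) ≠ 0 := Complex.ofReal_ne_zero.2 ha.ne'
  set α : ℂ := ((a ^ (-1 / m : ℝ) : ℝ) : ℂ) * Complex.exp (Real.pi * Complex.I / m)
  have hα : α ^ m = -(a : ℂ)⁻¹ := by
    have hr : (a ^ (-1 / m : ℝ)) ^ m = a⁻¹ := by
      rw [← Real.rpow_natCast, ← Real.rpow_mul ha.le,
        div_mul_cancel₀ _ (by exact_mod_cast hm.ne'), Real.rpow_neg_one]
    rw [mul_pow, ← Complex.exp_nat_mul, mul_div_cancel₀ _ hm', Complex.exp_pi_mul_I,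
      ← Complex.ofReal_pow, hr]
    push_cast; ring
  have hpoly : C (a : ℂ) * X ^ m + 1 = C (a : ℂ) * (X ^ m - C (-(a : ℂ)⁻¹)) := by
    rw [mul_sub, ← C_mul, mul_neg, mul_inv_cancel₀ ha', map_neg, C_1, sub_neg_eq_add]
  rw [hpoly, roots_C_mul _ ha', ← nthRoots,
    (Complex.isPrimitiveRoot_exp m hm.ne').nthRoots_eq hα]
  refine Multiset.map_congr rfl fun k _ => ?_
  rw [← Complex.exp_nat_mul, mul_left_comm, ← Complex.exp_add]
  congr 2
  field_simp

-- The critical points of `z ^ (m + 1) + z` lie on the circle of radius `(m + 1) ^ (-1 / m)`, and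
-- the critical values are `1 - 1 / (m + 1)` times the critical points.
noncomputable def criticalRadius (m : ℕ) : ℝ :=
  (1 - (m + 1 : ℝ)⁻¹) * (m + 1 : ℝ) ^ (-1 / m : ℝ)

lemma tendsto_criticalRadius : Tendsto criticalRadius atTop (𝓝 1) := by
  have h₁ : Tendsto (fun m : ℕ => 1 - (m + 1 : ℝ)⁻¹) atTop (𝓝 1) := by
    simpa using tendsto_const_nhds.sub (tendsto_one_div_add_atTop_nhds_zero_nat (𝕜 := ℝ))
  have h₂ : Tendsto (fun m : ℕ => (m + 1 : ℝ) ^ (-1 / m : ℝ)) atTop (𝓝 1) := by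
    have := (tendsto_rpow_div_mul_add (-1) 1 (-1) zero_ne_one).comp
      (tendsto_atTop_add_const_right _ 1 tendsto_natCast_atTop_atTop)
    exact this.congr fun m => by simp
  have h := h₁.mul h₂
  rwa [mul_one] at h

lemma sum_critical_values_eq_midpointSum (F : ℂ → ℝ) {m : ℕ} (hm : 0 < m) :
    1 / (((m + 1 : ℕ) : ℝ) - 1) *
        ((C ((m + 1 : ℕ) : ℂ) * X ^ (m + 1 - 1) + 1 : ℂ[X]).roots.map
          fun c => F (c ^ (m + 1) + c)).sum
      = 1 / (2 * Real.pi) * midpointSum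
          (fun θ => F (criticalRadius m * Complex.exp (θ * Complex.I))) 0 (2 * Real.pi) m := by
  have hroots := roots_C_mul_X_pow_add_one (a := m + 1) (by positivity) hm
  push_cast at hroots ⊢
  rw [show (fun c => F (c ^ (m + 1) + c)) = F ∘ fun c => c ^ (m + 1) + c from rfl,
    ← Multiset.map_map, roots_map_pow_succ_add_self, hroots, Multiset.map_map, Multiset.map_map,
    ← Finset.range_val, ← Finset.sum_eq_multiset_sum]
  simp only [midpointSum, add_sub_cancel_right, sub_zero, zero_add, mul_sum, Function.comp]
  refine sum_congr rfl fun k _ => ?_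
  have hpoint : (1 - ((m : ℂ) + 1)⁻¹) * ((((m + 1 : ℝ) ^ (-1 / m : ℝ) : ℝ) : ℂ) *
      Complex.exp ((2 * k + 1) * Real.pi / m * Complex.I))
      = criticalRadius m * Complex.exp (((k + 1 / 2) * (2 * Real.pi / m) : ℝ) * Complex.I) := by
    simp only [criticalRadius]
    push_cast
    ring_nf
  rw [hpoint]
  field_simp

/-- Example 4.2: the normalized counting measures of the finite critical values
`c^n + c` of `p_n(z) = z^n + z`, where `c` runs over the roots of
`p_n′(z) = n z^{n−1} + 1`, converge weakly to the uniform probability measure on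
the unit circle. -/
theorem critical_values_equidistribute_on_circle (f : BoundedContinuousFunction ℂ ℝ) :
    Tendsto
      (fun n : ℕ =>
        (1 / ((n : ℝ) - 1)) *
          (((C (n : ℂ) * X ^ (n - 1) + 1 : ℂ[X]).roots).map
            fun c => f (c ^ n + c)).sum)
      atTop
      (nhds ((1 / (2 * Real.pi)) *
        ∫ θ in (0 : ℝ)..(2 * Real.pi), f (Complex.exp (θ * Complex.I)))) := by
  have hg : Continuous fun θ : ℝ => f (Complex.exp (θ * Complex.I)) := by fun_prop
  have hradius : Tendsto (fun m => (criticalRadius m : ℂ)) atTop (𝓝 1) :=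
    (Complex.continuous_ofReal.tendsto' 1 1 Complex.ofReal_one).comp tendsto_criticalRadius
  have hunif : TendstoUniformlyOn
      (fun m (θ : ℝ) => f (criticalRadius m * Complex.exp (θ * Complex.I)))
      (fun θ : ℝ => f (Complex.exp (θ * Complex.I))) atTop (Set.Icc 0 (2 * Real.pi)) :=
    ((tendstoUniformlyOn_comp_mul f.continuous (isCompact_sphere 0 1) hradius).comp
      fun θ : ℝ => Complex.exp (θ * Complex.I)).mono fun θ _ => by simp
  rw [← tendsto_add_atTop_iff_nat 1]
  refine ((tendsto_midpointSum_of_tendstoUniformlyOn Real.two_pi_pos.le hunif hg.continuousOn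
    tendsto_id).const_mul _).congr' ?_
  filter_upwards [eventually_gt_atTop 0] with m hm
  exact (sum_critical_values_eq_midpointSum f hm).symm
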